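/- Suppose a differentiable function f : ℝ^p → ℝ satisfies the restricted strong convexity/smoothness condition with parameters 0 < m_s ≤ M_s on s-sparse differences: for all β, β′ with ‖β − β′‖₀ ≤ s, (m_s/2)‖β − β′‖² ≤ f(β) − f(β′) − ⟨∇f(β′), β − β′⟩ ≤ (M_s/2)‖β − β′‖². Then for any index set S with |S| ≤ s, any β, β′ supported in S, and any step size η ∈ (0, 2m_s/M_s²), ‖β − β′ − η∇_S f(β) + η∇_S f(β′)‖ ≤ √(1 − 2ηm_s + η²M_s²)·‖β − β′‖, and moreover √(1 − 2ηm_s + η²M_s²) < 1. -/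

import Mathlib

open Finset

/-- ℓ₀ "norm": number of nonzero entries. -/
noncomputable def l0 {p : ℕ} (v : Fin p → ℝ) : ℕ :=
  (Finset.univ.filter fun i => v i ≠ 0).card

/-- Euclidean norm. -/
noncomputable def norm2 {p : ℕ} (v : Fin p → ℝ) : ℝ :=
  Real.sqrt (∑ i, (v i) ^ 2)

/-- Inner product. -/
noncomputable def ip {p : ℕ} (v w : Fin p → ℝ) : ℝ := ∑ i, v i * w i

/-- Gradient restricted to an index set S. -/
noncomputable def restr {p : ℕ} (S : Finset (Fin p)) (v : Fin p → ℝ) : Fin p → ℝ :=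
  fun i => if i ∈ S then v i else 0

/-!
On vectors supported in `S` the sparse bounds say that `f` is `m`-strongly convex and `M`-smooth
with gradient `g = restr S ∇f`. Adding the lower bound to itself with the points swapped gives
`⟪g x - g y, x - y⟫ ≥ m ‖x - y‖²`; Nesterov's co-coercivity `‖g x - g y‖² ≤ M ⟪g x - g y, x - y⟫`
and Cauchy–Schwarz give `‖g x - g y‖ ≤ M ‖x - y‖`. Expanding `‖x - y - η (g x - g y)‖²` and
inserting both bounds yields the factor `1 - 2ηm + η²M²`, which is `< 1` exactly when `ηM² < 2m`.
-/

open scoped RealInnerProductSpace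

section QuadraticBounds

variable {E : Type*} [NormedAddCommGroup E] [InnerProductSpace ℝ E]

/-- Restricted strong convexity and smoothness of `f` on `K`, with `G` as its gradient. -/
def QuadraticBoundsOn (f : E → ℝ) (G : E → E) (m M : ℝ) (K : Set E) : Prop :=
  ∀ x ∈ K, ∀ y ∈ K,
    m / 2 * ‖x - y‖ ^ 2 ≤ f x - f y - ⟪G y, x - y⟫ ∧
      f x - f y - ⟪G y, x - y⟫ ≤ M / 2 * ‖x - y‖ ^ 2

namespace QuadraticBoundsOn

variable {f : E → ℝ} {G : E → E} {m M : ℝ} {x y : E}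

theorem mul_sq_norm_le_inner {K : Set E} (h : QuadraticBoundsOn f G m M K) (hx : x ∈ K)
    (hy : y ∈ K) : m * ‖x - y‖ ^ 2 ≤ ⟪G x - G y, x - y⟫ := by
  have hxy := (h x hx y hy).1
  have hyx := (h y hy x hx).1
  rw [← neg_sub x y, norm_neg, inner_neg_right] at hyx
  rw [inner_sub_left]
  linarith

variable {K : Submodule ℝ E}

/-- Compare `f` at `w = x - M⁻¹ (G x - G y) ∈ K` with the upper bound from `x` and the lower bound
from `y`. -/
theorem sq_norm_div_le (h : QuadraticBoundsOn f G m M K) (hG : ∀ z, G z ∈ K) (hm : 0 ≤ m)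
    (hM : 0 < M) (hx : x ∈ K) (hy : y ∈ K) :
    ‖G x - G y‖ ^ 2 / (2 * M) ≤ f x - f y - ⟪G y, x - y⟫ := by
  set δ := G x - G y
  set w := x - M⁻¹ • δ
  have hw : w ∈ K := K.sub_mem hx (K.smul_mem _ (K.sub_mem (hG x) (hG y)))
  have hupper := (h w hw x hx).2
  have hlower : 0 ≤ f w - f y - ⟪G y, w - y⟫ := le_trans (by positivity) (h w hw y hy).1
  have hwx : w - x = -(M⁻¹ • δ) := by simp [w]
  have hwy : w - y = (x - y) - M⁻¹ • δ := by simp only [w]; abel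
  rw [hwx, norm_neg, norm_smul, inner_neg_right, inner_smul_right] at hupper
  rw [hwy, inner_sub_right, inner_smul_right] at hlower
  have hδ : ⟪G x, δ⟫ - ⟪G y, δ⟫ = ‖δ‖ ^ 2 := by
    rw [← inner_sub_left, real_inner_self_eq_norm_sq]
  rw [Real.norm_of_nonneg (inv_nonneg.2 hM.le)] at hupper
  have hgap : ‖δ‖ ^ 2 / (2 * M) = M⁻¹ * (⟪G x, δ⟫ - ⟪G y, δ⟫) - M / 2 * (M⁻¹ * ‖δ‖) ^ 2 := by
    rw [hδ]; field_simp; ring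
  linarith

theorem sq_norm_le_mul_inner (h : QuadraticBoundsOn f G m M K) (hG : ∀ z, G z ∈ K) (hm : 0 ≤ m)
    (hM : 0 < M) (hx : x ∈ K) (hy : y ∈ K) :
    ‖G x - G y‖ ^ 2 ≤ M * ⟪G x - G y, x - y⟫ := by
  have hxy := h.sq_norm_div_le hG hm hM hx hy
  have hyx := h.sq_norm_div_le hG hm hM hy hx
  rw [← neg_sub x y, inner_neg_right, ← neg_sub (G x), norm_neg] at hyx
  rw [inner_sub_left, ← div_le_iff₀' hM]
  have hhalf : ‖G x - G y‖ ^ 2 / M = 2 * (‖G x - G y‖ ^ 2 / (2 * M)) := by field_simp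
  linarith

theorem norm_sub_le (h : QuadraticBoundsOn f G m M K) (hG : ∀ z, G z ∈ K) (hm : 0 ≤ m)
    (hM : 0 < M) (hx : x ∈ K) (hy : y ∈ K) : ‖G x - G y‖ ≤ M * ‖x - y‖ := by
  have hco := h.sq_norm_le_mul_inner hG hm hM hx hy
  have hcs := real_inner_le_norm (G x - G y) (x - y)
  have hmul : ‖G x - G y‖ * ‖G x - G y‖ ≤ ‖G x - G y‖ * (M * ‖x - y‖) := by nlinarith
  rcases (norm_nonneg (G x - G y)).eq_or_lt with h0 | hpos
  · rw [← h0]; positivity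
  · exact le_of_mul_le_mul_left hmul hpos

theorem norm_sub_smul_sub_le (h : QuadraticBoundsOn f G m M K) (hG : ∀ z, G z ∈ K)
    (hm : 0 ≤ m) (hM : 0 < M) (hx : x ∈ K) (hy : y ∈ K) {η : ℝ} (hη : 0 ≤ η) :
    ‖x - y - η • (G x - G y)‖ ≤ √(1 - 2 * η * m + η ^ 2 * M ^ 2) * ‖x - y‖ := by
  have hmono := h.mul_sq_norm_le_inner hx hy
  have hlip := h.norm_sub_le hG hm hM hx hy
  have hsq : ‖x - y - η • (G x - G y)‖ ^ 2 ≤ (1 - 2 * η * m + η ^ 2 * M ^ 2) * ‖x - y‖ ^ 2 := by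
    rw [norm_sub_sq_real, norm_smul, inner_smul_right, real_inner_comm, Real.norm_of_nonneg hη]
    have hmono' := mul_le_mul_of_nonneg_left hmono hη
    have hlip' := pow_le_pow_left₀ (norm_nonneg _) hlip 2
    nlinarith
  calc ‖x - y - η • (G x - G y)‖ = √(‖x - y - η • (G x - G y)‖ ^ 2) :=
        (Real.sqrt_sq (norm_nonneg _)).symm
    _ ≤ √((1 - 2 * η * m + η ^ 2 * M ^ 2) * ‖x - y‖ ^ 2) := Real.sqrt_le_sqrt hsq
    _ = √(1 - 2 * η * m + η ^ 2 * M ^ 2) * ‖x - y‖ := by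
        rw [Real.sqrt_mul' _ (by positivity), Real.sqrt_sq (norm_nonneg _)]

end QuadraticBoundsOn

end QuadraticBounds

theorem sqrt_one_sub_two_mul_add_sq_lt_one {η m M : ℝ} (hη0 : 0 < η) (hη : η < 2 * m / M ^ 2) :
    √(1 - 2 * η * m + η ^ 2 * M ^ 2) < 1 := by
  have hM : 0 < M ^ 2 := by
    rcases (sq_nonneg M).eq_or_lt with h0 | hpos
    · rw [← h0, div_zero] at hη; linarith
    · exact hpos
  rw [lt_div_iff₀ hM] at hη
  rw [Real.sqrt_lt' one_pos]
  nlinarith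

section SparseVectors

variable {p : ℕ}

theorem norm2_eq_norm (v : Fin p → ℝ) : norm2 v = ‖WithLp.toLp 2 v‖ := by
  simp [norm2, EuclideanSpace.norm_eq]

theorem ip_eq_inner (v w : Fin p → ℝ) : ip v w = ⟪WithLp.toLp 2 v, WithLp.toLp 2 w⟫ := by
  simp [ip, PiLp.inner_apply, mul_comm]

theorem ip_restr_of_support (S : Finset (Fin p)) (v : Fin p → ℝ) {w : Fin p → ℝ}
    (hw : ∀ i ∉ S, w i = 0) : ip (restr S v) w = ip v w :=
  sum_congr rfl fun i _ => by by_cases hi : i ∈ S <;> simp [restr, hi, hw]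

theorem l0_le_card_of_support {S : Finset (Fin p)} {w : Fin p → ℝ} (hw : ∀ i ∉ S, w i = 0) :
    l0 w ≤ S.card :=
  card_le_card fun i hi => by_contra fun h => (mem_filter.1 hi).2 (hw i h)

def supportedIn (S : Finset (Fin p)) : Submodule ℝ (EuclideanSpace ℝ (Fin p)) where
  carrier := {x | ∀ i ∉ S, x i = 0}
  add_mem' hx hy i hi := by simp [hx i hi, hy i hi]
  zero_mem' _ _ := rfl
  smul_mem' c x hx i hi := by simp [hx i hi]

end SparseVectors

theorem rsc_rss_gradient_contraction_general
    (p s : ℕ) (f : (Fin p → ℝ) → ℝ) (gradf : (Fin p → ℝ) → (Fin p → ℝ))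
    (ms Ms : ℝ) (hms : 0 < ms) (hmM : ms ≤ Ms)
    (hrsc : ∀ β β' : Fin p → ℝ, l0 (β - β') ≤ s →
      (ms / 2) * (norm2 (β - β')) ^ 2
          ≤ f β - f β' - ip (gradf β') (β - β') ∧
      f β - f β' - ip (gradf β') (β - β')
          ≤ (Ms / 2) * (norm2 (β - β')) ^ 2)
    (S : Finset (Fin p)) (hS : S.card ≤ s)
    (β β' : Fin p → ℝ)
    (hβ : ∀ i, i ∉ S → β i = 0) (hβ' : ∀ i, i ∉ S → β' i = 0)
    (η : ℝ) (hη0 : 0 < η) (hη1 : η < 2 * ms / Ms ^ 2) :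
    norm2 (β - β' - η • restr S (gradf β) + η • restr S (gradf β'))
        ≤ Real.sqrt (1 - 2 * η * ms + η ^ 2 * Ms ^ 2) * norm2 (β - β') ∧
      Real.sqrt (1 - 2 * η * ms + η ^ 2 * Ms ^ 2) < 1 := by
  let G : EuclideanSpace ℝ (Fin p) → EuclideanSpace ℝ (Fin p) :=
    fun x => WithLp.toLp 2 (restr S (gradf x.ofLp))
  have hG : ∀ x, G x ∈ supportedIn S := fun x i hi => by simp [G, restr, hi]
  have hbounds : QuadraticBoundsOn (fun x => f x.ofLp) G ms Ms (supportedIn S) := by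
    intro x hx y hy
    have hxy : ∀ i ∉ S, (x - y).ofLp i = 0 := (supportedIn S).sub_mem hx hy
    have hsparse := hrsc x.ofLp y.ofLp ((l0_le_card_of_support hxy).trans hS)
    rwa [← WithLp.ofLp_sub, norm2_eq_norm, ← ip_restr_of_support S _ hxy, ip_eq_inner] at hsparse
  have hstep := hbounds.norm_sub_smul_sub_le hG hms.le (hms.trans_le hmM)
    (x := WithLp.toLp 2 β) (y := WithLp.toLp 2 β') hβ hβ' hη0.le
  refine ⟨?_, sqrt_one_sub_two_mul_add_sq_lt_one hη0 hη1⟩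
  convert hstep using 2
  · rw [norm2_eq_norm]
    congr 1
    ext i
    simp only [Pi.add_apply, Pi.sub_apply, Pi.smul_apply, smul_eq_mul, PiLp.sub_apply,
      PiLp.smul_apply, G]
    ring
  · rw [norm2_eq_norm, WithLp.toLp_sub]

/-- restricted-strong-convexity/smoothness contraction of the
gradient step (Lemma from Nesterov). -/
theorem rsc_rss_gradient_contraction
    (p s : ℕ) (f : (Fin p → ℝ) → ℝ) (gradf : (Fin p → ℝ) → (Fin p → ℝ))
    (hderiv : ∀ β, HasGradientAt (fun v : EuclideanSpace ℝ (Fin p) => f v)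
        (WithLp.toLp 2 (gradf β)) (WithLp.toLp 2 β))
    (ms Ms : ℝ) (hms : 0 < ms) (hmM : ms ≤ Ms)
    (hrsc : ∀ β β' : Fin p → ℝ, l0 (β - β') ≤ s →
      (ms / 2) * (norm2 (β - β')) ^ 2
          ≤ f β - f β' - ip (gradf β') (β - β') ∧
      f β - f β' - ip (gradf β') (β - β')
          ≤ (Ms / 2) * (norm2 (β - β')) ^ 2)
    (S : Finset (Fin p)) (hS : S.card ≤ s)
    (β β' : Fin p → ℝ)
    (hβ : ∀ i, i ∉ S → β i = 0) (hβ' : ∀ i, i ∉ S → β' i = 0)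
    (η : ℝ) (hη0 : 0 < η) (hη1 : η < 2 * ms / Ms ^ 2) :
    norm2 (β - β' - η • restr S (gradf β) + η • restr S (gradf β'))
        ≤ Real.sqrt (1 - 2 * η * ms + η ^ 2 * Ms ^ 2) * norm2 (β - β') ∧
      Real.sqrt (1 - 2 * η * ms + η ^ 2 * Ms ^ 2) < 1 :=
  rsc_rss_gradient_contraction_general p s f gradf ms Ms hms hmM hrsc S hS β β' hβ hβ' η hη0 hη1
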